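/- Suppose J^{π̃,k}(μ), as a function of π̃ on the simplex Δ(Π_det) ⊂ ℝ^{Π_det}, is differentiable and β-smooth with respect to a norm ‖·‖, and let Φ be a differentiable mirror map that is λ-strongly convex with respect to the same norm, with Bregman divergence D_Φ(x,y) = Φ(x) − Φ(y) − ⟨∇Φ(y), x − y⟩. Let π̃_0, π̃_1, …, π̃_T be the mirror descent iterates π̃_{t+1} = argmin_{π̃ ∈ Δ(Π_det)} ⟨∇J^{π̃_t,k}(μ), π̃⟩ + (1/η) D_Φ(π̃, π̃_t) with learning rate η = λ/β. Then for every T ≥ 1, E_{π_det ∼ π̃_T}[J^{π_det}(μ)] − J^{π_det^*}(μ) ≤ 8 γ^k g_max/(1−γ) + (1/T)·(β/λ)·D_Φ(π̃^*, π̃_0), where π_det^* ∈ Π_det minimizes J^{π_det}(μ) over Π_det and π̃^* is the Dirac distribution at π_det^*. -/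

import Mathlib

open Finset

noncomputable section

variable {S A D : Type*} [Fintype S] [Fintype A] [Fintype D] [DecidableEq S]

/-- Transition matrix of a deterministic policy `pol`. -/
def detKernel (P : S → A → S → ℝ) (pol : S → A) : Matrix S S ℝ :=
  Matrix.of fun s s' => P s (pol s) s'

/-- Expected discounted cost incurred during the first `k` steps when following the
deterministic policy `pol` starting from state `s`. -/
def detCost (P : S → A → S → ℝ) (g : S → A → ℝ) (γ : ℝ) (pol : S → A) (k : ℕ) (s : S) : ℝ :=
  ∑ t ∈ Finset.range k, γ ^ t * ∑ s', (detKernel P pol ^ t) s s' * g s' (pol s')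

/-- Value function `J^{π_det}(s)` of a deterministic policy. -/
def detJ (P : S → A → S → ℝ) (g : S → A → ℝ) (γ : ℝ) (pol : S → A) (s : S) : ℝ :=
  ∑' t : ℕ, γ ^ t * ∑ s', (detKernel P pol ^ t) s s' * g s' (pol s')

/-- Value `J^{π_det}(μ)` of a deterministic policy from an initial distribution `μ`. -/
def detJInit (P : S → A → S → ℝ) (g : S → A → ℝ) (γ : ℝ) (pol : S → A) (μ : S → ℝ) : ℝ :=
  ∑ s, μ s * detJ P g γ pol s

/-- The `k`-step transition kernel of the correlated policy with weights `w`
over the family `p` of deterministic policies. -/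
def corKernel (P : S → A → S → ℝ) (p : D → S → A) (w : D → ℝ) (k : ℕ) : Matrix S S ℝ :=
  ∑ d, w d • (detKernel P (p d) ^ k)

/-- Expected discounted cost of one `k`-step block of the correlated policy from `s`. -/
def blockCost (P : S → A → S → ℝ) (g : S → A → ℝ) (γ : ℝ) (p : D → S → A) (w : D → ℝ)
    (k : ℕ) (s : S) : ℝ :=
  ∑ d, w d * detCost P g γ (p d) k s

/-- The `k`-step value function `J^{π̃,k}(s)` of the correlated policy `w`. -/
def Jk (P : S → A → S → ℝ) (g : S → A → ℝ) (γ : ℝ) (p : D → S → A) (w : D → ℝ)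
    (k : ℕ) (s : S) : ℝ :=
  ∑' m : ℕ, γ ^ (m * k) * ∑ s', (corKernel P p w k ^ m) s s' * blockCost P g γ p w k s'

/-- `J^{π̃,k}(μ)`. -/
def JkInit (P : S → A → S → ℝ) (g : S → A → ℝ) (γ : ℝ) (p : D → S → A) (w : D → ℝ)
    (k : ℕ) (μ : S → ℝ) : ℝ :=
  ∑ s, μ s * Jk P g γ p w k s

/-- The `k`-step Q-function `Q^{π̃,k}(s, π')` with deterministic second argument `pol`. -/
def Qk (P : S → A → S → ℝ) (g : S → A → ℝ) (γ : ℝ) (p : D → S → A) (w : D → ℝ)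
    (k : ℕ) (s : S) (pol : S → A) : ℝ :=
  detCost P g γ pol k s + γ ^ k * ∑ s', (detKernel P pol ^ k) s s' * Jk P g γ p w k s'

/-- The `k`-step Q-function `Q^{π̃,k}(s, π̃')` with correlated second argument `w'`. -/
def QkCor (P : S → A → S → ℝ) (g : S → A → ℝ) (γ : ℝ) (p : D → S → A) (w : D → ℝ)
    (k : ℕ) (s : S) (w' : D → ℝ) : ℝ :=
  ∑ d, w' d * Qk P g γ p w k s (p d)

/-- The `k`-step discounted state occupancy measure `d_μ^{π̃,k}(s)`. -/
def dOcc (P : S → A → S → ℝ) (γ : ℝ) (p : D → S → A) (w : D → ℝ) (k : ℕ)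
    (μ : S → ℝ) (s : S) : ℝ :=
  (1 - γ ^ k) * ∑' m : ℕ, γ ^ (m * k) * ∑ s0, μ s0 * (corKernel P p w k ^ m) s0 s


/-- Bregman divergence `D_Φ(x,y) = Φ(x) − Φ(y) − ⟨∇Φ(y), x − y⟩` of a differentiable
mirror map `Φ` on `ℝ^{Π_det}`, the pairing being given by the Fréchet derivative. -/
def bregD (Φ : (D → ℝ) → ℝ) (x y : D → ℝ) : ℝ :=
  Φ x - Φ y - fderiv ℝ Φ y (x - y)

/-!
Write `G = g_max / (1 - γ)`, `x = γ^k` and `F(π̃) = J^{π̃,k}(μ)`. All values lie in `[-G, G]`,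
so for `x > 1/3` the bound is trivial. Otherwise `F` is convex up to an additive error: by the
performance difference lemma, moving from `w` a fraction `a` towards `π̃^*` changes `F` by `a` times
the discounted advantage of `π̃^*`, computed under the kernel of the interpolated policy instead of
that of `π̃^*`. The two kernels only matter from the second `k`-block on, so
`∇F(w)·(π̃^* - w) ≤ F(π̃^*) - F(w) + 4xG/(1-x)`. The standard mirror descent analysis
(smoothness, strong convexity, three-point identity, monotonicity, telescoping) turns this into
`F(π̃_T) - F(π̃^*) ≤ 4xG/(1-x) + (β/λ) D_Φ(π̃^*, π̃_0)/T`. Finally `F(π̃^*) = J^{π^*}(μ)` and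
`E_{π ∼ π̃_T} J^π(μ) ≤ F(π̃_T) + 2xG`, as both agree with the expected cost of the first block up
to `xG`.
-/

theorem abs_sum_mul_le_of_mem_stdSimplex {ι : Type*} [Fintype ι] {w v : ι → ℝ} {C : ℝ}
    (hw : w ∈ stdSimplex ℝ ι) (hv : ∀ i, |v i| ≤ C) : |∑ i, w i * v i| ≤ C :=
  calc |∑ i, w i * v i| ≤ ∑ i, w i * C :=
        (abs_sum_le_sum_abs _ _).trans <| sum_le_sum fun i _ => by
          rw [abs_mul, abs_of_nonneg (hw.1 i)]
          exact mul_le_mul_of_nonneg_left (hv i) (hw.1 i)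
    _ = C := by rw [← sum_mul, hw.2, one_mul]

theorem fderiv_apply_le_of_forall_sub_le {E : Type*} [NormedAddCommGroup E] [NormedSpace ℝ E]
    {f : E → ℝ} {w v : E} {C : ℝ} (hf : DifferentiableAt ℝ f w)
    (h : ∀ a ∈ Set.Icc (0 : ℝ) 1, f (w + a • v) - f w ≤ a * C) : fderiv ℝ f w v ≤ C := by
  have hline : HasDerivAt (fun a : ℝ => f (w + a • v)) (fderiv ℝ f w v) 0 := by
    have hseg : HasDerivAt (fun a : ℝ => w + a • v) v 0 := by
      simpa using ((hasDerivAt_id (0 : ℝ)).smul_const v).const_add w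
    have hf' : HasFDerivAt f (fderiv ℝ f w) (w + (0 : ℝ) • v) := by
      simpa using hf.hasFDerivAt
    exact hf'.comp_hasDerivAt 0 hseg
  refine le_of_tendsto hline.tendsto_slope_zero_right ?_
  filter_upwards [Ioc_mem_nhdsGT (zero_lt_one' ℝ)] with a ha
  rw [zero_add, zero_smul, add_zero, smul_eq_mul, inv_mul_le_iff₀ ha.1]
  exact h a ⟨ha.1.le, ha.2⟩

namespace Matrix

variable {σ : Type*} [Fintype σ] {M M' : Matrix σ σ ℝ} {x C : ℝ} {c : σ → ℝ}

theorem mulVec_tsum_apply {f : ℕ → σ → ℝ} (hf : ∀ l, Summable fun u => f u l) (s : σ) :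
    (M *ᵥ fun l => ∑' u, f u l) s = ∑' u, (M *ᵥ f u) s := by
  simp only [mulVec, dotProduct, ← tsum_mul_left]
  exact (Summable.tsum_finsetSum fun l _ => (hf l).mul_left _).symm

variable [DecidableEq σ]

theorem abs_mulVec_le_of_mem_rowStochastic (hM : M ∈ rowStochastic ℝ σ)
    (hc : ∀ s, |c s| ≤ C) (s : σ) : |(M *ᵥ c) s| ≤ C :=
  abs_sum_mul_le_of_mem_stdSimplex
    ⟨fun _ => nonneg_of_mem_rowStochastic hM, sum_row_of_mem_rowStochastic hM s⟩ hc

def discountedValue (x : ℝ) (M : Matrix σ σ ℝ) (c : σ → ℝ) (s : σ) : ℝ :=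
  ∑' m : ℕ, x ^ m * (M ^ m *ᵥ c) s

theorem abs_pow_mul_mulVec_le (hx : 0 ≤ x) (hM : M ∈ rowStochastic ℝ σ)
    (hc : ∀ s, |c s| ≤ C) (m : ℕ) (s : σ) : |x ^ m * (M ^ m *ᵥ c) s| ≤ x ^ m * C := by
  rw [abs_mul, abs_pow, abs_of_nonneg hx]
  exact mul_le_mul_of_nonneg_left
    (abs_mulVec_le_of_mem_rowStochastic (pow_mem hM m) hc s) (pow_nonneg hx m)

theorem summable_discountedValue (hx0 : 0 ≤ x) (hx1 : x < 1) (hM : M ∈ rowStochastic ℝ σ)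
    (c : σ → ℝ) (s : σ) : Summable fun m : ℕ => x ^ m * (M ^ m *ᵥ c) s :=
  .of_norm_bounded ((summable_geometric_of_lt_one hx0 hx1).mul_right ‖c‖) fun m =>
    (Real.norm_eq_abs _).trans_le (abs_pow_mul_mulVec_le hx0 hM (norm_le_pi_norm c) m s)

theorem abs_discountedValue_le (hx0 : 0 ≤ x) (hx1 : x < 1) (hM : M ∈ rowStochastic ℝ σ)
    (hc : ∀ s, |c s| ≤ C) (s : σ) : |discountedValue x M c s| ≤ C / (1 - x) := by
  rw [div_eq_inv_mul]
  exact tsum_of_norm_bounded ((hasSum_geometric_of_lt_one hx0 hx1).mul_right C) fun m =>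
    (Real.norm_eq_abs _).trans_le (abs_pow_mul_mulVec_le hx0 hM hc m s)

theorem discountedValue_add (hx0 : 0 ≤ x) (hx1 : x < 1) (hM : M ∈ rowStochastic ℝ σ)
    (c c' : σ → ℝ) :
    discountedValue x M (c + c') = discountedValue x M c + discountedValue x M c' := by
  funext s
  simp only [discountedValue, mulVec_add, Pi.add_apply, mul_add]
  exact (summable_discountedValue hx0 hx1 hM c s).tsum_add
    (summable_discountedValue hx0 hx1 hM c' s)

theorem discountedValue_smul (a : ℝ) (c : σ → ℝ) :
    discountedValue x M (a • c) = a • discountedValue x M c := by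
  funext s
  simp only [discountedValue, mulVec_smul, Pi.smul_apply, smul_eq_mul, ← tsum_mul_left,
    mul_left_comm a]

theorem discountedValue_eq_sum_range_add (hx0 : 0 ≤ x) (hx1 : x < 1)
    (hM : M ∈ rowStochastic ℝ σ) (c : σ → ℝ) (k : ℕ) (s : σ) :
    discountedValue x M c s = ∑ t ∈ range k, x ^ t * (M ^ t *ᵥ c) s +
      x ^ k * (M ^ k *ᵥ discountedValue x M c) s := by
  have hsum := summable_discountedValue hx0 hx1 hM c
  have hV : (M ^ k *ᵥ discountedValue x M c) s =
      ∑' u, (M ^ k *ᵥ fun l => x ^ u * (M ^ u *ᵥ c) l) s :=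
    mulVec_tsum_apply hsum s
  rw [discountedValue, ← (hsum s).sum_add_tsum_nat_add k, hV, ← tsum_mul_left]
  congr 1
  refine tsum_congr fun u => ?_
  rw [show (fun l => x ^ u * (M ^ u *ᵥ c) l) = x ^ u • (M ^ u *ᵥ c) from rfl, mulVec_smul,
    mulVec_mulVec, ← pow_add, Pi.smul_apply, smul_eq_mul, add_comm k u, pow_add]
  ring

theorem discountedValue_eq_add_mulVec (hx0 : 0 ≤ x) (hx1 : x < 1)
    (hM : M ∈ rowStochastic ℝ σ) (c : σ → ℝ) :
    discountedValue x M c = c + x • (M *ᵥ discountedValue x M c) := by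
  funext s
  simpa using discountedValue_eq_sum_range_add hx0 hx1 hM c 1 s

theorem discountedValue_smul_mulVec_sub (hx0 : 0 ≤ x) (hx1 : x < 1)
    (hM : M ∈ rowStochastic ℝ σ) (J : σ → ℝ) :
    discountedValue x M (x • (M *ᵥ J) - J) = -J := by
  funext s
  set a : ℕ → ℝ := fun m => x ^ m * (M ^ m *ᵥ J) s
  have ha : Summable a := summable_discountedValue hx0 hx1 hM J s
  calc discountedValue x M (x • (M *ᵥ J) - J) s = ∑' m, (a (m + 1) - a m) :=
        tsum_congr fun m => by
          simp only [a, mulVec_sub, mulVec_smul, mulVec_mulVec, ← pow_succ, Pi.sub_apply,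
            Pi.smul_apply, smul_eq_mul]
          ring
    _ = -J s := by
        rw [((summable_nat_add_iff 1).2 ha).tsum_sub ha, ha.tsum_eq_zero_add]
        simp [a]

theorem discountedValue_add_smul_mulVec_sub (hx0 : 0 ≤ x) (hx1 : x < 1)
    (hM : M ∈ rowStochastic ℝ σ) (c J : σ → ℝ) :
    discountedValue x M (c + x • (M *ᵥ J) - J) = discountedValue x M c - J := by
  rw [add_sub_assoc, discountedValue_add hx0 hx1 hM,
    discountedValue_smul_mulVec_sub hx0 hx1 hM, sub_eq_add_neg]

theorem discountedValue_eq_of_eq_add_mulVec (hx0 : 0 ≤ x) (hx1 : x < 1)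
    (hM : M ∈ rowStochastic ℝ σ) {J : σ → ℝ} (hJ : J = c + x • (M *ᵥ J)) :
    discountedValue x M c = J := by
  have h := discountedValue_add_smul_mulVec_sub hx0 hx1 hM c J
  rwa [← hJ, sub_self, ← zero_smul ℝ (0 : σ → ℝ), discountedValue_smul, zero_smul,
    eq_comm, sub_eq_zero] at h

theorem abs_sub_le_of_eq_add_smul_mulVec (hx : 0 ≤ x) (hM : M ∈ rowStochastic ℝ σ)
    {J V : σ → ℝ} (hJ : J = c + x • (M *ᵥ V)) (hV : ∀ s, |V s| ≤ C) (s : σ) :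
    |J s - c s| ≤ x * C := by
  rw [hJ, Pi.add_apply, add_sub_cancel_left, Pi.smul_apply, smul_eq_mul, abs_mul,
    abs_of_nonneg hx]
  exact mul_le_mul_of_nonneg_left (abs_mulVec_le_of_mem_rowStochastic hM hV s) hx

theorem abs_discountedValue_sub_le (hx0 : 0 ≤ x) (hx1 : x < 1)
    (hM : M ∈ rowStochastic ℝ σ) (hM' : M' ∈ rowStochastic ℝ σ) (hc : ∀ s, |c s| ≤ C)
    (s : σ) : |discountedValue x M c s - discountedValue x M' c s| ≤ 2 * x * C / (1 - x) := by
  have hV {N : Matrix σ σ ℝ} (hN : N ∈ rowStochastic ℝ σ) :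
      |(N *ᵥ discountedValue x N c) s| ≤ C / (1 - x) :=
    abs_mulVec_le_of_mem_rowStochastic hN (abs_discountedValue_le hx0 hx1 hN hc) s
  rw [discountedValue_eq_add_mulVec hx0 hx1 hM, discountedValue_eq_add_mulVec hx0 hx1 hM']
  calc |(c + x • (M *ᵥ discountedValue x M c)) s - (c + x • (M' *ᵥ discountedValue x M' c)) s|
      = x * |(M *ᵥ discountedValue x M c) s - (M' *ᵥ discountedValue x M' c) s| := by
        simp only [Pi.add_apply, Pi.smul_apply, smul_eq_mul, add_sub_add_left_eq_sub, ← mul_sub,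
          abs_mul, abs_of_nonneg hx0]
    _ ≤ x * (C / (1 - x) + C / (1 - x)) :=
        mul_le_mul_of_nonneg_left ((abs_sub _ _).trans (add_le_add (hV hM) (hV hM'))) hx0
    _ = 2 * x * C / (1 - x) := by ring

end Matrix

section MarkovDecisionProcess

open Matrix

variable {σ α ι : Type*} [Fintype σ] [DecidableEq σ] [Fintype ι]
  {P : σ → α → σ → ℝ} {g : σ → α → ℝ} {γ gmax : ℝ} {p : ι → σ → α} {k : ℕ}

theorem detKernel_mem_rowStochastic (hP : ∀ s a, P s a ∈ stdSimplex ℝ σ) (pol : σ → α) :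
    detKernel P pol ∈ rowStochastic ℝ σ :=
  mem_rowStochastic_iff_sum.2 ⟨fun s _ => (hP s (pol s)).1 _, fun s => (hP s (pol s)).2⟩

theorem corKernel_eq_linearCombination (P : σ → α → σ → ℝ) (p : ι → σ → α) (w : ι → ℝ)
    (k : ℕ) :
    corKernel P p w k = Fintype.linearCombination ℝ (fun d => detKernel P (p d) ^ k) w :=
  (Fintype.linearCombination_apply ℝ _ w).symm

theorem blockCost_eq_linearCombination (P : σ → α → σ → ℝ) (g : σ → α → ℝ) (γ : ℝ)
    (p : ι → σ → α) (w : ι → ℝ) (k : ℕ) :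
    blockCost P g γ p w k = Fintype.linearCombination ℝ (fun d => detCost P g γ (p d) k) w := by
  funext s
  simp [blockCost, Fintype.linearCombination_apply, Finset.sum_apply]

theorem corKernel_mem_rowStochastic (hP : ∀ s a, P s a ∈ stdSimplex ℝ σ) {w : ι → ℝ}
    (hw : w ∈ stdSimplex ℝ ι) (k : ℕ) : corKernel P p w k ∈ rowStochastic ℝ σ :=
  convex_rowStochastic.sum_mem (fun d _ => hw.1 d) hw.2 fun d _ =>
    pow_mem (detKernel_mem_rowStochastic hP (p d)) k

theorem Jk_eq_discountedValue (P : σ → α → σ → ℝ) (g : σ → α → ℝ) (γ : ℝ) (p : ι → σ → α)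
    (w : ι → ℝ) (k : ℕ) :
    Jk P g γ p w k =
      discountedValue (γ ^ k) (corKernel P p w k) (blockCost P g γ p w k) :=
  funext fun _ => tsum_congr fun m => by rw [mul_comm m k, pow_mul]; rfl

theorem abs_detJ_le (hP : ∀ s a, P s a ∈ stdSimplex ℝ σ) (hg : ∀ s a, |g s a| ≤ gmax)
    (hγ0 : 0 ≤ γ) (hγ1 : γ < 1) (pol : σ → α) (s : σ) :
    |detJ P g γ pol s| ≤ gmax / (1 - γ) :=
  abs_discountedValue_le hγ0 hγ1 (detKernel_mem_rowStochastic hP pol) (fun s => hg s (pol s)) s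

theorem abs_detJInit_le (hP : ∀ s a, P s a ∈ stdSimplex ℝ σ) (hg : ∀ s a, |g s a| ≤ gmax)
    (hγ0 : 0 ≤ γ) (hγ1 : γ < 1) {μ : σ → ℝ} (hμ : μ ∈ stdSimplex ℝ σ) (pol : σ → α) :
    |detJInit P g γ pol μ| ≤ gmax / (1 - γ) :=
  abs_sum_mul_le_of_mem_stdSimplex hμ (abs_detJ_le hP hg hγ0 hγ1 pol)

theorem abs_detCost_le (hP : ∀ s a, P s a ∈ stdSimplex ℝ σ) (hg : ∀ s a, |g s a| ≤ gmax)
    (hγ0 : 0 ≤ γ) (hγ1 : γ < 1) (pol : σ → α) (k : ℕ) (s : σ) :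
    |detCost P g γ pol k s| ≤ (1 - γ ^ k) * (gmax / (1 - γ)) := by
  have h1γ : 1 - γ ≠ 0 := sub_ne_zero.2 hγ1.ne'
  have hγ1' : γ - 1 ≠ 0 := sub_ne_zero.2 hγ1.ne
  calc |detCost P g γ pol k s| ≤ ∑ t ∈ range k, γ ^ t * gmax :=
        (abs_sum_le_sum_abs _ _).trans <| sum_le_sum fun t _ =>
          abs_pow_mul_mulVec_le hγ0 (detKernel_mem_rowStochastic hP pol) (fun s => hg s (pol s))
            t s
    _ = (1 - γ ^ k) * (gmax / (1 - γ)) := by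
        rw [← sum_mul, geom_sum_eq hγ1.ne k]
        field_simp
        ring

theorem abs_blockCost_le (hP : ∀ s a, P s a ∈ stdSimplex ℝ σ) (hg : ∀ s a, |g s a| ≤ gmax)
    (hγ0 : 0 ≤ γ) (hγ1 : γ < 1) {w : ι → ℝ} (hw : w ∈ stdSimplex ℝ ι) (k : ℕ) (s : σ) :
    |blockCost P g γ p w k s| ≤ (1 - γ ^ k) * (gmax / (1 - γ)) :=
  abs_sum_mul_le_of_mem_stdSimplex hw fun d => abs_detCost_le hP hg hγ0 hγ1 (p d) k s

theorem abs_Jk_le (hP : ∀ s a, P s a ∈ stdSimplex ℝ σ) (hg : ∀ s a, |g s a| ≤ gmax)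
    (hγ0 : 0 ≤ γ) (hγ1 : γ < 1) (hk : 0 < k) {w : ι → ℝ} (hw : w ∈ stdSimplex ℝ ι) (s : σ) :
    |Jk P g γ p w k s| ≤ gmax / (1 - γ) := by
  have hx1 : γ ^ k < 1 := pow_lt_one₀ hγ0 hγ1 hk.ne'
  rw [Jk_eq_discountedValue, ← mul_div_cancel_left₀ (gmax / (1 - γ)) (sub_ne_zero.2 hx1.ne')]
  exact abs_discountedValue_le (pow_nonneg hγ0 k) hx1 (corKernel_mem_rowStochastic hP hw k)
    (abs_blockCost_le hP hg hγ0 hγ1 hw k) s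

theorem detJ_eq_detCost_add (hP : ∀ s a, P s a ∈ stdSimplex ℝ σ) (hγ0 : 0 ≤ γ) (hγ1 : γ < 1)
    (pol : σ → α) (k : ℕ) :
    detJ P g γ pol = detCost P g γ pol k + γ ^ k • (detKernel P pol ^ k *ᵥ detJ P g γ pol) :=
  funext fun s =>
    discountedValue_eq_sum_range_add hγ0 hγ1 (detKernel_mem_rowStochastic hP pol) _ k s

theorem Jk_eq_blockCost_add (hP : ∀ s a, P s a ∈ stdSimplex ℝ σ) (hγ0 : 0 ≤ γ) (hγ1 : γ < 1)
    (hk : 0 < k) {w : ι → ℝ} (hw : w ∈ stdSimplex ℝ ι) :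
    Jk P g γ p w k = blockCost P g γ p w k + γ ^ k • (corKernel P p w k *ᵥ Jk P g γ p w k) := by
  rw [Jk_eq_discountedValue]
  exact discountedValue_eq_add_mulVec (pow_nonneg hγ0 k) (pow_lt_one₀ hγ0 hγ1 hk.ne')
    (corKernel_mem_rowStochastic hP hw k) _

theorem Jk_single [DecidableEq ι] (hP : ∀ s a, P s a ∈ stdSimplex ℝ σ) (hγ0 : 0 ≤ γ)
    (hγ1 : γ < 1) (hk : 0 < k) (d : ι) :
    Jk P g γ p (Pi.single d 1) k = detJ P g γ (p d) := by
  have hcor : corKernel P p (Pi.single d 1) k = detKernel P (p d) ^ k := by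
    simp [corKernel_eq_linearCombination]
  have hcost : blockCost P g γ p (Pi.single d 1) k = detCost P g γ (p d) k := by
    simp [blockCost_eq_linearCombination]
  rw [Jk_eq_discountedValue, hcor, hcost]
  exact discountedValue_eq_of_eq_add_mulVec (pow_nonneg hγ0 k) (pow_lt_one₀ hγ0 hγ1 hk.ne')
    (pow_mem (detKernel_mem_rowStochastic hP (p d)) k) (detJ_eq_detCost_add hP hγ0 hγ1 (p d) k)

theorem JkInit_single [DecidableEq ι] (hP : ∀ s a, P s a ∈ stdSimplex ℝ σ) (hγ0 : 0 ≤ γ)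
    (hγ1 : γ < 1) (hk : 0 < k) (d : ι) (μ : σ → ℝ) :
    JkInit P g γ p (Pi.single d 1) k μ = detJInit P g γ (p d) μ := by
  simp only [JkInit, detJInit, Jk_single hP hγ0 hγ1 hk]

theorem sum_mul_detJInit_le_JkInit (hP : ∀ s a, P s a ∈ stdSimplex ℝ σ)
    (hg : ∀ s a, |g s a| ≤ gmax) (hγ0 : 0 ≤ γ) (hγ1 : γ < 1) (hk : 0 < k) {μ : σ → ℝ}
    (hμ : μ ∈ stdSimplex ℝ σ) {w : ι → ℝ} (hw : w ∈ stdSimplex ℝ ι) :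
    ∑ d, w d * detJInit P g γ (p d) μ ≤
      JkInit P g γ p w k μ + 2 * (γ ^ k * (gmax / (1 - γ))) := by
  have hpt (s : σ) :
      ∑ d, w d * detJ P g γ (p d) s ≤ Jk P g γ p w k s + 2 * (γ ^ k * (gmax / (1 - γ))) := by
    have hdet : |∑ d, w d * (detJ P g γ (p d) s - detCost P g γ (p d) k s)| ≤
        γ ^ k * (gmax / (1 - γ)) :=
      abs_sum_mul_le_of_mem_stdSimplex hw fun d =>
        abs_sub_le_of_eq_add_smul_mulVec (pow_nonneg hγ0 k)
          (pow_mem (detKernel_mem_rowStochastic hP (p d)) k)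
          (detJ_eq_detCost_add hP hγ0 hγ1 (p d) k) (abs_detJ_le hP hg hγ0 hγ1 (p d)) s
    have hcor : |Jk P g γ p w k s - blockCost P g γ p w k s| ≤ γ ^ k * (gmax / (1 - γ)) :=
      abs_sub_le_of_eq_add_smul_mulVec (pow_nonneg hγ0 k) (corKernel_mem_rowStochastic hP hw k)
        (Jk_eq_blockCost_add hP hγ0 hγ1 hk hw) (abs_Jk_le hP hg hγ0 hγ1 hk hw) s
    simp only [mul_sub, sum_sub_distrib] at hdet
    rw [blockCost] at hcor
    linarith [abs_le.1 hdet, abs_le.1 hcor]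
  calc ∑ d, w d * detJInit P g γ (p d) μ = ∑ s, μ s * ∑ d, w d * detJ P g γ (p d) s := by
        simp only [detJInit, mul_sum, mul_left_comm (w _)]
        exact sum_comm
    _ ≤ ∑ s, μ s * (Jk P g γ p w k s + 2 * (γ ^ k * (gmax / (1 - γ)))) :=
        sum_le_sum fun s _ => mul_le_mul_of_nonneg_left (hpt s) (hμ.1 s)
    _ = JkInit P g γ p w k μ + 2 * (γ ^ k * (gmax / (1 - γ))) := by
        simp only [JkInit, mul_add, sum_add_distrib, ← sum_mul, hμ.2, one_mul]

theorem Jk_add_smul_sub_sub_le (hP : ∀ s a, P s a ∈ stdSimplex ℝ σ)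
    (hg : ∀ s a, |g s a| ≤ gmax) (hγ0 : 0 ≤ γ) (hγ1 : γ < 1) (hk : 0 < k) {w w' : ι → ℝ}
    (hw : w ∈ stdSimplex ℝ ι) (hw' : w' ∈ stdSimplex ℝ ι) {a : ℝ} (ha : a ∈ Set.Icc 0 1)
    (s : σ) :
    Jk P g γ p (w + a • (w' - w)) k s - Jk P g γ p w k s ≤
      a * (Jk P g γ p w' k s - Jk P g γ p w k s +
        4 * γ ^ k * (gmax / (1 - γ)) / (1 - γ ^ k)) := by
  set x := γ ^ k
  set G := gmax / (1 - γ)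
  have hx0 : 0 ≤ x := pow_nonneg hγ0 k
  have hx1 : x < 1 := pow_lt_one₀ hγ0 hγ1 hk.ne'
  set J := Jk P g γ p w k
  have hM' := corKernel_mem_rowStochastic (p := p) hP hw' k
  have hJbd : ∀ s, |J s| ≤ G := abs_Jk_le hP hg hγ0 hγ1 hk hw
  -- performance difference lemma: `J_v - J_w` is the discounted advantage of `v` over `w`
  have hperf {v : ι → ℝ} (hv : v ∈ stdSimplex ℝ ι) : Jk P g γ p v k - J =
      discountedValue x (corKernel P p v k) (blockCost P g γ p v k +
        x • (corKernel P p v k *ᵥ J) - J) := by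
    rw [discountedValue_add_smul_mulVec_sub hx0 hx1 (corKernel_mem_rowStochastic hP hv k),
      Jk_eq_discountedValue]
  set A := blockCost P g γ p w' k + x • (corKernel P p w' k *ᵥ J) - J
  have hA (s : σ) : |A s| ≤ 2 * G := by
    have hc := abs_blockCost_le (p := p) hP hg hγ0 hγ1 hw' k s
    have hMJ := abs_mulVec_le_of_mem_rowStochastic hM' hJbd s
    have hJ := hJbd s
    simp only [A, Pi.sub_apply, Pi.add_apply, Pi.smul_apply, smul_eq_mul]
    calc _ ≤ |blockCost P g γ p w' k s| + x * |(corKernel P p w' k *ᵥ J) s| + |J s| := by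
          grw [abs_sub, abs_add_le, abs_mul, abs_of_nonneg hx0]
      _ ≤ (1 - x) * G + x * G + G := by gcongr
      _ = 2 * G := by ring
  -- the advantage over `w` is affine in the policy and vanishes at `w`
  have hadv : blockCost P g γ p (w + a • (w' - w)) k +
      x • (corKernel P p (w + a • (w' - w)) k *ᵥ J) - J = a • A := by
    have hJ : J = blockCost P g γ p w k + x • (corKernel P p w k *ᵥ J) :=
      Jk_eq_blockCost_add hP hγ0 hγ1 hk hw
    simp only [A, corKernel_eq_linearCombination, blockCost_eq_linearCombination, map_add,
      map_smul, map_sub, add_mulVec, smul_mulVec, sub_mulVec] at hJ ⊢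
    linear_combination (norm := module) (a - 1) • hJ
  have hwa := (convex_stdSimplex ℝ ι).add_smul_sub_mem hw hw' ha
  calc Jk P g γ p (w + a • (w' - w)) k s - J s
      = a * discountedValue x (corKernel P p (w + a • (w' - w)) k) A s := by
        rw [← Pi.sub_apply, hperf hwa, hadv, discountedValue_smul]
        rfl
    _ ≤ a * (discountedValue x (corKernel P p w' k) A s + 2 * x * (2 * G) / (1 - x)) := by
        gcongr
        · exact ha.1
        · linarith [abs_le.1 (abs_discountedValue_sub_le hx0 hx1
            (corKernel_mem_rowStochastic (p := p) hP hwa k) hM' hA s)]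
    _ = a * (Jk P g γ p w' k s - J s + 4 * x * G / (1 - x)) := by
        rw [← Pi.sub_apply (Jk P g γ p w' k), hperf hw']
        ring

theorem JkInit_add_smul_sub_sub_le (hP : ∀ s a, P s a ∈ stdSimplex ℝ σ)
    (hg : ∀ s a, |g s a| ≤ gmax) (hγ0 : 0 ≤ γ) (hγ1 : γ < 1) (hk : 0 < k) {μ : σ → ℝ}
    (hμ : μ ∈ stdSimplex ℝ σ) {w w' : ι → ℝ} (hw : w ∈ stdSimplex ℝ ι)
    (hw' : w' ∈ stdSimplex ℝ ι) {a : ℝ} (ha : a ∈ Set.Icc 0 1) :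
    JkInit P g γ p (w + a • (w' - w)) k μ - JkInit P g γ p w k μ ≤
      a * (JkInit P g γ p w' k μ - JkInit P g γ p w k μ +
        4 * γ ^ k * (gmax / (1 - γ)) / (1 - γ ^ k)) := by
  set ε := 4 * γ ^ k * (gmax / (1 - γ)) / (1 - γ ^ k)
  calc JkInit P g γ p (w + a • (w' - w)) k μ - JkInit P g γ p w k μ
      = ∑ s, μ s * (Jk P g γ p (w + a • (w' - w)) k s - Jk P g γ p w k s) := by
        simp only [JkInit, mul_sub, sum_sub_distrib]
    _ ≤ ∑ s, μ s * (a * (Jk P g γ p w' k s - Jk P g γ p w k s + ε)) :=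
        sum_le_sum fun s _ => mul_le_mul_of_nonneg_left
          (Jk_add_smul_sub_sub_le hP hg hγ0 hγ1 hk hw hw' ha s) (hμ.1 s)
    _ = a * (JkInit P g γ p w' k μ - JkInit P g γ p w k μ + ε) := by
        simp only [JkInit, mul_add, mul_sub, mul_left_comm (μ _) a, ← mul_sum, sum_add_distrib,
          sum_sub_distrib, ← sum_mul, hμ.2, one_mul]

theorem fderiv_JkInit_le (hP : ∀ s a, P s a ∈ stdSimplex ℝ σ)
    (hg : ∀ s a, |g s a| ≤ gmax) (hγ0 : 0 ≤ γ) (hγ1 : γ < 1) (hk : 0 < k) {μ : σ → ℝ}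
    (hμ : μ ∈ stdSimplex ℝ σ) {w w' : ι → ℝ} (hw : w ∈ stdSimplex ℝ ι)
    (hw' : w' ∈ stdSimplex ℝ ι) (hdiff : DifferentiableAt ℝ (fun v => JkInit P g γ p v k μ) w) :
    fderiv ℝ (fun v => JkInit P g γ p v k μ) w (w' - w) ≤
      JkInit P g γ p w' k μ - JkInit P g γ p w k μ +
        4 * γ ^ k * (gmax / (1 - γ)) / (1 - γ ^ k) :=
  fderiv_apply_le_of_forall_sub_le hdiff fun _ ha =>
    JkInit_add_smul_sub_sub_le hP hg hγ0 hγ1 hk hμ hw hw' ha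

end MarkovDecisionProcess

section MirrorDescent

variable {ι : Type*} {f Φ nrm : (ι → ℝ) → ℝ} {K : Set (ι → ℝ)} {β lam : ℝ}

theorem bregD_self (Φ : (ι → ℝ) → ℝ) (x : ι → ℝ) : bregD Φ x x = 0 := by
  simp [bregD]

theorem mul_sq_le_bregD
    (hsc : ∀ x ∈ K, ∀ y ∈ K, Φ x + fderiv ℝ Φ x (y - x) + lam / 2 * nrm (y - x) ^ 2 ≤ Φ y)
    {x y : ι → ℝ} (hx : x ∈ K) (hy : y ∈ K) : lam / 2 * nrm (y - x) ^ 2 ≤ bregD Φ y x := by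
  have := hsc x hx y hy
  rw [bregD]
  linarith

theorem bregD_nonneg (hlam : 0 ≤ lam)
    (hsc : ∀ x ∈ K, ∀ y ∈ K, Φ x + fderiv ℝ Φ x (y - x) + lam / 2 * nrm (y - x) ^ 2 ≤ Φ y)
    {x y : ι → ℝ} (hx : x ∈ K) (hy : y ∈ K) : 0 ≤ bregD Φ y x :=
  (mul_nonneg (div_nonneg hlam zero_le_two) (sq_nonneg _)).trans (mul_sq_le_bregD hsc hx hy)

theorem sub_le_mul_bregD_of_isMinOn [Fintype ι] (hK : Convex ℝ K) (hΦ : Differentiable ℝ Φ)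
    (L : (ι → ℝ) →L[ℝ] ℝ) (c : ℝ) {u v y : ι → ℝ} (hu : u ∈ K) (hy : y ∈ K)
    (hmin : IsMinOn (fun z => L z + c * bregD Φ z v) K u) :
    L u - L y ≤ c * (bregD Φ y v - bregD Φ y u - bregD Φ u v) := by
  have hbreg : HasFDerivAt (fun z => bregD Φ z v) (fderiv ℝ Φ u - fderiv ℝ Φ v) u := by
    have h := ((hΦ u).hasFDerivAt.sub_const (Φ v)).sub
      ((fderiv ℝ Φ v).hasFDerivAt.comp u ((hasFDerivAt_id u).sub_const v))
    rwa [ContinuousLinearMap.comp_id] at h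
  have hopt := IsLocalMinOn.hasFDerivWithinAt_nonneg (IsMinOn.localize hmin)
    (L.hasFDerivAt.add (hbreg.const_mul c)).hasFDerivWithinAt
    (sub_mem_posTangentConeAt_of_segment_subset (hK.segment_subset hu hy))
  have hthree : bregD Φ y v - bregD Φ y u - bregD Φ u v =
      fderiv ℝ Φ u (y - u) - fderiv ℝ Φ v (y - u) := by
    simp only [bregD, map_sub]
    ring
  simp only [add_apply, smul_apply, sub_apply, smul_eq_mul, map_sub] at hopt
  rw [hthree, map_sub, map_sub]
  linarith

theorem le_add_fderiv_add_mul_bregD_of_isMinOn [Fintype ι] (hK : Convex ℝ K)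
    (hΦ : Differentiable ℝ Φ) (hβ : 0 ≤ β) (hlam : 0 < lam)
    (hsmooth : ∀ x ∈ K, ∀ y ∈ K, f y ≤ f x + fderiv ℝ f x (y - x) + β / 2 * nrm (y - x) ^ 2)
    (hsc : ∀ x ∈ K, ∀ y ∈ K, Φ x + fderiv ℝ Φ x (y - x) + lam / 2 * nrm (y - x) ^ 2 ≤ Φ y)
    {u v y : ι → ℝ} (hu : u ∈ K) (hv : v ∈ K) (hy : y ∈ K)
    (hmin : IsMinOn (fun z => fderiv ℝ f v z + β / lam * bregD Φ z v) K u) :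
    f u ≤ f v + fderiv ℝ f v (y - v) + β / lam * (bregD Φ y v - bregD Φ y u) := by
  have hthree := sub_le_mul_bregD_of_isMinOn hK hΦ (fderiv ℝ f v) (β / lam) hu hy hmin
  have hsm := hsmooth v hv u hu
  have hquad : β / 2 * nrm (u - v) ^ 2 ≤ β / lam * bregD Φ u v :=
    calc β / 2 * nrm (u - v) ^ 2 = β / lam * (lam / 2 * nrm (u - v) ^ 2) := by
          field_simp
      _ ≤ β / lam * bregD Φ u v :=
          mul_le_mul_of_nonneg_left (mul_sq_le_bregD hsc hv hu) (by positivity)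
  rw [map_sub] at hsm ⊢
  linarith

theorem Antitone.sub_le_add_one_div_mul {a d : ℕ → ℝ} {b ε : ℝ} {T : ℕ} (ha : Antitone a)
    (hd : 0 ≤ d T) (h : ∀ t, a (t + 1) - b ≤ ε + (d t - d (t + 1))) (hT : 0 < T) :
    a T - b ≤ ε + 1 / T * d 0 := by
  have hT' : (0 : ℝ) < T := by exact_mod_cast hT
  have hsum : T * (a T - b) ≤ T * ε + d 0 :=
    calc T * (a T - b) = ∑ t ∈ range T, (a T - b) := by
          rw [sum_const, card_range, nsmul_eq_mul]
      _ ≤ ∑ t ∈ range T, (a (t + 1) - b) :=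
          sum_le_sum fun t ht => by linarith [ha (mem_range.1 ht : t + 1 ≤ T)]
      _ ≤ ∑ t ∈ range T, (ε + (d t - d (t + 1))) := sum_le_sum fun t _ => h t
      _ = T * ε + (d 0 - d T) := by
          rw [sum_add_distrib, sum_range_sub', sum_const, card_range, nsmul_eq_mul]
      _ ≤ T * ε + d 0 := by linarith
  rw [one_div_mul_eq_div, ← sub_le_iff_le_add', le_div_iff₀ hT']
  linarith

theorem mirrorDescent_sub_le [Fintype ι] {W : ℕ → ι → ℝ} {w : ι → ℝ} {ε : ℝ} {T : ℕ}
    (hK : Convex ℝ K) (hW : ∀ t, W t ∈ K) (hw : w ∈ K) (hβ : 0 ≤ β) (hlam : 0 < lam)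
    (hΦ : Differentiable ℝ Φ)
    (hsmooth : ∀ x ∈ K, ∀ y ∈ K, f y ≤ f x + fderiv ℝ f x (y - x) + β / 2 * nrm (y - x) ^ 2)
    (hsc : ∀ x ∈ K, ∀ y ∈ K, Φ x + fderiv ℝ Φ x (y - x) + lam / 2 * nrm (y - x) ^ 2 ≤ Φ y)
    (hstep : ∀ t, IsMinOn (fun y => fderiv ℝ f (W t) y + β / lam * bregD Φ y (W t)) K (W (t + 1)))
    (hgrad : ∀ t, fderiv ℝ f (W t) (w - W t) ≤ f w - f (W t) + ε) (hT : 0 < T) :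
    f (W T) - f w ≤ ε + 1 / T * (β / lam) * bregD Φ w (W 0) := by
  have hdesc (t : ℕ) {y : ι → ℝ} (hy : y ∈ K) :=
    le_add_fderiv_add_mul_bregD_of_isMinOn hK hΦ hβ hlam hsmooth hsc (hW (t + 1)) (hW t) hy
      (hstep t)
  have hc : 0 ≤ β / lam := div_nonneg hβ hlam.le
  have hanti : Antitone fun t => f (W t) := antitone_nat_of_succ_le fun t => by
    have h := hdesc t (hW t)
    rw [sub_self, map_zero, bregD_self] at h
    nlinarith [bregD_nonneg hlam.le hsc (hW (t + 1)) (hW t)]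
  rw [mul_assoc]
  refine hanti.sub_le_add_one_div_mul (d := fun t => β / lam * bregD Φ w (W t))
    (mul_nonneg hc (bregD_nonneg hlam.le hsc (hW T) hw)) (fun t => ?_) hT
  linarith [hdesc t hw, hgrad t, mul_sub (β / lam) (bregD Φ w (W t)) (bregD Φ w (W (t + 1)))]

end MirrorDescent

theorem mirror_descent_bound_general
    [DecidableEq D]
    (P : S → A → S → ℝ) (g : S → A → ℝ) (γ gmax β lam : ℝ) (μ : S → ℝ)
    (p : D → S → A) (k : ℕ) (dstar : D)
    (nrm : (D → ℝ) → ℝ) (Φ : (D → ℝ) → ℝ) (W : ℕ → D → ℝ) (wstar : D → ℝ) (T : ℕ)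
    (hP : ∀ s a, (∀ s', 0 ≤ P s a s') ∧ ∑ s', P s a s' = 1)
    (hg : ∀ s a, |g s a| ≤ gmax)
    (hγ0 : 0 < γ) (hγ1 : γ < 1)
    (hμ : μ ∈ stdSimplex ℝ S)
    (hk : 1 ≤ k) (hβ : 0 < β) (hlam : 0 < lam)
    -- the k-step objective is differentiable and β-smooth w.r.t. `nrm`:
    (hdiff : Differentiable ℝ (fun w : D → ℝ => JkInit P g γ p w k μ))
    (hsmooth : ∀ x ∈ stdSimplex ℝ D, ∀ y ∈ stdSimplex ℝ D,
      JkInit P g γ p y k μ ≤ JkInit P g γ p x k μ +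
        fderiv ℝ (fun w : D → ℝ => JkInit P g γ p w k μ) x (y - x) +
          β / 2 * nrm (y - x) ^ 2)
    -- `Φ` is a differentiable, λ-strongly convex mirror map w.r.t. `nrm`:
    (hΦ : Differentiable ℝ Φ)
    (hsc : ∀ x ∈ stdSimplex ℝ D, ∀ y ∈ stdSimplex ℝ D,
      Φ x + fderiv ℝ Φ x (y - x) + lam / 2 * nrm (y - x) ^ 2 ≤ Φ y)
    -- mirror descent iterates with learning rate `η = λ/β` (so `1/η = β/λ`):
    (hW0 : W 0 ∈ stdSimplex ℝ D)
    (hstep : ∀ t : ℕ, W (t + 1) ∈ stdSimplex ℝ D ∧ ∀ y ∈ stdSimplex ℝ D,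
      fderiv ℝ (fun w : D → ℝ => JkInit P g γ p w k μ) (W t) (W (t + 1)) +
          (β / lam) * bregD Φ (W (t + 1)) (W t) ≤
        fderiv ℝ (fun w : D → ℝ => JkInit P g γ p w k μ) (W t) y +
          (β / lam) * bregD Φ y (W t))
    (hwstar : ∀ d, wstar d = if d = dstar then 1 else 0)
    (hT : 1 ≤ T) :
    (∑ d, W T d * detJInit P g γ (p d) μ) - detJInit P g γ (p dstar) μ ≤
      8 * γ ^ k * gmax / (1 - γ) + (1 / (T : ℝ)) * (β / lam) * bregD Φ wstar (W 0) := by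
  obtain rfl : wstar = Pi.single dstar 1 := funext fun d => by rw [hwstar, Pi.single_apply]
  have hW (t : ℕ) : W t ∈ stdSimplex ℝ D := t.casesOn hW0 fun t => (hstep t).1
  have hG : 0 ≤ gmax / (1 - γ) :=
    (abs_nonneg _).trans (abs_detJInit_le hP hg hγ0.le hγ1 hμ (p dstar))
  have hreg : 0 ≤ 1 / (T : ℝ) * (β / lam) * bregD Φ (Pi.single dstar 1) (W 0) := by
    have := bregD_nonneg hlam.le hsc (hW 0) (single_mem_stdSimplex ℝ dstar)
    positivity
  rw [show 8 * γ ^ k * gmax / (1 - γ) = 8 * (γ ^ k * (gmax / (1 - γ))) by ring]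
  rcases le_or_gt (γ ^ k) (1 / 3) with hsmall | hlarge
  · have hmd := mirrorDescent_sub_le (convex_stdSimplex ℝ D) hW (single_mem_stdSimplex ℝ dstar)
      hβ.le hlam hΦ hsmooth hsc (fun t => isMinOn_iff.2 (hstep t).2)
      (fun t => fderiv_JkInit_le hP hg hγ0.le hγ1 hk hμ (hW t) (single_mem_stdSimplex ℝ dstar)
        (hdiff _)) hT
    rw [JkInit_single hP hγ0.le hγ1 hk] at hmd
    have hmix := sum_mul_detJInit_le_JkInit (p := p) hP hg hγ0.le hγ1 hk hμ (hW T)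
    have hε : 4 * γ ^ k * (gmax / (1 - γ)) / (1 - γ ^ k) ≤ 6 * (γ ^ k * (gmax / (1 - γ))) := by
      rw [div_le_iff₀ (by linarith)]
      nlinarith [mul_nonneg (sub_nonneg.2 hsmall) (mul_nonneg (pow_nonneg hγ0.le k) hG)]
    linarith
  · have hmix := abs_sum_mul_le_of_mem_stdSimplex (hW T) fun d =>
      abs_detJInit_le hP hg hγ0.le hγ1 hμ (p d)
    have hstar := abs_detJInit_le hP hg hγ0.le hγ1 hμ (p dstar)
    nlinarith [abs_le.1 hmix, abs_le.1 hstar, mul_le_mul_of_nonneg_right hlarge.le hG]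

/-- **Convergence of mirror descent with the k-step policy gradient.**
Suppose `π̃ ↦ J^{π̃,k}(μ)` is differentiable and `β`-smooth with respect to a norm `nrm`
on `ℝ^{Π_det}`, and `Φ` is a differentiable mirror map that is `λ`-strongly convex with
respect to the same norm. Let `W 0, W 1, …` be the mirror descent iterates, where
`W (t+1)` minimizes `π̃ ↦ ⟨∇J^{W t,k}(μ), π̃⟩ + (1/η) D_Φ(π̃, W t)` over `Δ(Π_det)` with
learning rate `η = λ/β`. Then for every `T ≥ 1`,
`E_{π_det ∼ W T}[J^{π_det}(μ)] − J^{π_det^*}(μ)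
  ≤ 8 γ^k g_max/(1−γ) + (1/T)(β/λ) D_Φ(π̃^*, W 0)`,
where `π̃^*` is the Dirac distribution at the optimal deterministic policy `p dstar`. -/
theorem mirror_descent_bound
    [DecidableEq D]
    (P : S → A → S → ℝ) (g : S → A → ℝ) (γ gmax β lam : ℝ) (μ : S → ℝ)
    (p : D → S → A) (k : ℕ) (dstar : D)
    (nrm : (D → ℝ) → ℝ) (Φ : (D → ℝ) → ℝ) (W : ℕ → D → ℝ) (wstar : D → ℝ) (T : ℕ)
    (hP : ∀ s a, (∀ s', 0 ≤ P s a s') ∧ ∑ s', P s a s' = 1)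
    (hg : ∀ s a, |g s a| ≤ gmax)
    (hγ0 : 0 < γ) (hγ1 : γ < 1)
    (hμ : μ ∈ stdSimplex ℝ S)
    (hk : 1 ≤ k) (hβ : 0 < β) (hlam : 0 < lam)
    -- `nrm` is a norm on `ℝ^{Π_det}`:
    (hnrm_zero : ∀ x : D → ℝ, nrm x = 0 ↔ x = 0)
    (hnrm_smul : ∀ (c : ℝ) (x : D → ℝ), nrm (c • x) = |c| * nrm x)
    (hnrm_add : ∀ x y : D → ℝ, nrm (x + y) ≤ nrm x + nrm y)
    -- the k-step objective is differentiable and β-smooth w.r.t. `nrm`: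
    (hdiff : Differentiable ℝ (fun w : D → ℝ => JkInit P g γ p w k μ))
    (hsmooth : ∀ x ∈ stdSimplex ℝ D, ∀ y ∈ stdSimplex ℝ D,
      JkInit P g γ p y k μ ≤ JkInit P g γ p x k μ +
        fderiv ℝ (fun w : D → ℝ => JkInit P g γ p w k μ) x (y - x) +
          β / 2 * nrm (y - x) ^ 2)
    -- `Φ` is a differentiable, λ-strongly convex mirror map w.r.t. `nrm`:
    (hΦ : Differentiable ℝ Φ)
    (hsc : ∀ x ∈ stdSimplex ℝ D, ∀ y ∈ stdSimplex ℝ D,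
      Φ x + fderiv ℝ Φ x (y - x) + lam / 2 * nrm (y - x) ^ 2 ≤ Φ y)
    -- mirror descent iterates with learning rate `η = λ/β` (so `1/η = β/λ`):
    (hW0 : W 0 ∈ stdSimplex ℝ D)
    (hstep : ∀ t : ℕ, W (t + 1) ∈ stdSimplex ℝ D ∧ ∀ y ∈ stdSimplex ℝ D,
      fderiv ℝ (fun w : D → ℝ => JkInit P g γ p w k μ) (W t) (W (t + 1)) +
          (β / lam) * bregD Φ (W (t + 1)) (W t) ≤
        fderiv ℝ (fun w : D → ℝ => JkInit P g γ p w k μ) (W t) y +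
          (β / lam) * bregD Φ y (W t))
    (hwstar : ∀ d, wstar d = if d = dstar then 1 else 0)
    (hstar : ∀ d, detJInit P g γ (p dstar) μ ≤ detJInit P g γ (p d) μ)
    (hT : 1 ≤ T) :
    (∑ d, W T d * detJInit P g γ (p d) μ) - detJInit P g γ (p dstar) μ ≤
      8 * γ ^ k * gmax / (1 - γ) + (1 / (T : ℝ)) * (β / lam) * bregD Φ wstar (W 0) :=
  mirror_descent_bound_general P g γ gmax β lam μ p k dstar nrm Φ W wstar T hP hg hγ0 hγ1 hμ hk hβ
    hlam hdiff hsmooth hΦ hsc hW0 hstep hwstar hT
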